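/- There exists a constant C > 0 such that for all integers j ≥ 1, all l ∈ ℤ, all k ∈ ℤ and all x ∈ ℝ one has ∫_{-1}^{1} | Δ²_{h·2^{-j}} (ψ_{j+l,k} ∘ ρ₁)(x) | dh ≤ C · min(1, 2^l); that is, the rectangular second-order mean of differences at scale 2^{-j} of the reflected-periodized Chui–Wang wavelet at level j+l is uniformly bounded by a constant times min(1, 2^l). -/
import Mathlib


open MeasureTheory

/-- The second order cardinal B-spline `N₂`. -/
noncomputable def N2 (x : ℝ) : ℝ :=
  if 0 ≤ x ∧ x < 1 then x else if 1 ≤ x ∧ x < 2 then 2 - x else 0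

/-- The second order Chui–Wang mother wavelet `ψ`. -/
noncomputable def cwPsi (x : ℝ) : ℝ :=
  if 0 ≤ x ∧ x < 1 / 2 then x / 6
  else if 1 / 2 ≤ x ∧ x < 1 then -7 * x / 6 + 2 / 3
  else if 1 ≤ x ∧ x < 3 / 2 then 8 * x / 3 - 19 / 6
  else if 3 / 2 ≤ x ∧ x < 2 then -8 * x / 3 + 29 / 6
  else if 2 ≤ x ∧ x < 5 / 2 then 7 * x / 6 - 17 / 6
  else if 5 / 2 ≤ x ∧ x < 3 then -x / 6 + 1 / 2
  else 0

/-- The Chui–Wang wavelet system: `ψ_{j,k}(x) = ψ(2^j x - k)` for `j ≥ 0`,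
`ψ_{-1,k}(x) = N₂(x - k)`, and `ψ_{j,k} = 0` for `j < -1`. -/
noncomputable def cw (j k : ℤ) (x : ℝ) : ℝ :=
  if 0 ≤ j then cwPsi ((2 : ℝ) ^ j * x - (k : ℝ))
  else if j = -1 then N2 (x - (k : ℝ))
  else 0

/-- The 2-periodic reflection `ρ₁(x) = min(x mod 2, (-x) mod 2)`. -/
noncomputable def rho1 (x : ℝ) : ℝ :=
  min (2 * Int.fract (x / 2)) (2 * Int.fract (-x / 2))

/-- Second-order forward difference `Δ²_s g(x) = g(x+2s) - 2g(x+s) + g(x)`. -/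
def diff2 (s : ℝ) (g : ℝ → ℝ) (x : ℝ) : ℝ :=
  g (x + 2 * s) - 2 * g (x + s) + g x


lemma relu_lip (c a b : ℝ) : |max (a - c) 0 - max (b - c) 0| ≤ |a - b| := by
  have h := abs_max_sub_max_le_abs (a - c) (b - c) 0
  have e : (a - c) - (b - c) = a - b := by ring
  rwa [e] at h

lemma cwPsi_eq (x : ℝ) : cwPsi x =
    (1/6) * max (x - 0) 0 - (4/3) * max (x - 1/2) 0 + (23/6) * max (x - 1) 0
    - (16/3) * max (x - 3/2) 0 + (23/6) * max (x - 2) 0 - (4/3) * max (x - 5/2) 0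
    + (1/6) * max (x - 3) 0 := by
  have rpos : ∀ c : ℝ, c ≤ x → max (x - c) 0 = x - c := fun c h => max_eq_left (by linarith)
  have rneg : ∀ c : ℝ, x ≤ c → max (x - c) 0 = 0 := fun c h => max_eq_right (by linarith)
  unfold cwPsi
  split_ifs with h1 h2 h3 h4 h5 h6
  · obtain ⟨ha, hb⟩ := h1
    rw [rpos 0 (by linarith), rneg (1/2) (by linarith), rneg 1 (by linarith),
        rneg (3/2) (by linarith), rneg 2 (by linarith), rneg (5/2) (by linarith),
        rneg 3 (by linarith)]
    ring
  · obtain ⟨ha, hb⟩ := h2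
    rw [rpos 0 (by linarith), rpos (1/2) (by linarith), rneg 1 (by linarith),
        rneg (3/2) (by linarith), rneg 2 (by linarith), rneg (5/2) (by linarith),
        rneg 3 (by linarith)]
    ring
  · obtain ⟨ha, hb⟩ := h3
    rw [rpos 0 (by linarith), rpos (1/2) (by linarith), rpos 1 (by linarith),
        rneg (3/2) (by linarith), rneg 2 (by linarith), rneg (5/2) (by linarith),
        rneg 3 (by linarith)]
    ring
  · obtain ⟨ha, hb⟩ := h4
    rw [rpos 0 (by linarith), rpos (1/2) (by linarith), rpos 1 (by linarith),
        rpos (3/2) (by linarith), rneg 2 (by linarith), rneg (5/2) (by linarith),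
        rneg 3 (by linarith)]
    ring
  · obtain ⟨ha, hb⟩ := h5
    rw [rpos 0 (by linarith), rpos (1/2) (by linarith), rpos 1 (by linarith),
        rpos (3/2) (by linarith), rpos 2 (by linarith), rneg (5/2) (by linarith),
        rneg 3 (by linarith)]
    ring
  · obtain ⟨ha, hb⟩ := h6
    rw [rpos 0 (by linarith), rpos (1/2) (by linarith), rpos 1 (by linarith),
        rpos (3/2) (by linarith), rpos 2 (by linarith), rpos (5/2) (by linarith),
        rneg 3 (by linarith)]
    ring
  · rcases lt_or_ge x 0 with hx | hx
    · rw [rneg 0 hx.le, rneg (1/2) (by linarith), rneg 1 (by linarith),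
          rneg (3/2) (by linarith), rneg 2 (by linarith), rneg (5/2) (by linarith),
          rneg 3 (by linarith)]
      ring
    · push_neg at h1 h2 h3 h4 h5 h6
      have c1 := h1 hx
      have c2 := h2 c1
      have c3 := h3 c2
      have c4 := h4 c3
      have c5 := h5 c4
      have c6 := h6 c5
      rw [rpos 0 hx, rpos (1/2) (by linarith), rpos 1 (by linarith),
          rpos (3/2) (by linarith), rpos 2 (by linarith), rpos (5/2) (by linarith),
          rpos 3 (by linarith)]
      ring

lemma cwPsi_lip (a b : ℝ) : |cwPsi a - cwPsi b| ≤ 16 * |a - b| := by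
  have l0 := abs_le.mp (relu_lip 0 a b)
  have l1 := abs_le.mp (relu_lip (1/2) a b)
  have l2 := abs_le.mp (relu_lip 1 a b)
  have l3 := abs_le.mp (relu_lip (3/2) a b)
  have l4 := abs_le.mp (relu_lip 2 a b)
  have l5 := abs_le.mp (relu_lip (5/2) a b)
  have l6 := abs_le.mp (relu_lip 3 a b)
  rw [cwPsi_eq a, cwPsi_eq b, abs_le]
  constructor <;>
    linarith [l0.1, l0.2, l1.1, l1.2, l2.1, l2.2, l3.1, l3.2, l4.1, l4.2, l5.1, l5.2, l6.1, l6.2]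

lemma N2_eq (x : ℝ) : N2 x = max (x - 0) 0 - 2 * max (x - 1) 0 + max (x - 2) 0 := by
  have rpos : ∀ c : ℝ, c ≤ x → max (x - c) 0 = x - c := fun c h => max_eq_left (by linarith)
  have rneg : ∀ c : ℝ, x ≤ c → max (x - c) 0 = 0 := fun c h => max_eq_right (by linarith)
  unfold N2
  split_ifs with h1 h2
  · obtain ⟨ha, hb⟩ := h1
    rw [rpos 0 (by linarith), rneg 1 (by linarith), rneg 2 (by linarith)]; ring
  · obtain ⟨ha, hb⟩ := h2
    rw [rpos 0 (by linarith), rpos 1 (by linarith), rneg 2 (by linarith)]; ring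
  · rcases lt_or_ge x 0 with hx | hx
    · rw [rneg 0 hx.le, rneg 1 (by linarith), rneg 2 (by linarith)]; ring
    · push_neg at h1 h2
      have c1 := h1 hx
      have c2 := h2 c1
      rw [rpos 0 hx, rpos 1 (by linarith), rpos 2 (by linarith)]; ring

lemma N2_lip (a b : ℝ) : |N2 a - N2 b| ≤ 4 * |a - b| := by
  have l0 := abs_le.mp (relu_lip 0 a b)
  have l1 := abs_le.mp (relu_lip 1 a b)
  have l2 := abs_le.mp (relu_lip 2 a b)
  rw [N2_eq a, N2_eq b, abs_le]
  constructor <;> linarith [l0.1, l0.2, l1.1, l1.2, l2.1, l2.2]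

lemma cwPsi_abs_le (x : ℝ) : |cwPsi x| ≤ 1 := by
  unfold cwPsi
  split_ifs <;> (try casesm* _ ∧ _) <;> rw [abs_le] <;> constructor <;> linarith

lemma N2_abs_le (x : ℝ) : |N2 x| ≤ 1 := by
  unfold N2
  split_ifs <;> (try casesm* _ ∧ _) <;> rw [abs_le] <;> constructor <;> linarith


lemma cw_abs_le (m k : ℤ) (x : ℝ) : |cw m k x| ≤ 1 := by
  unfold cw
  split_ifs
  · exact cwPsi_abs_le _
  · exact N2_abs_le _
  · simp

lemma cw_lip (m k : ℤ) (a b : ℝ) : |cw m k a - cw m k b| ≤ 16 * (2:ℝ) ^ m * |a - b| := by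
  unfold cw
  split_ifs with h0 h1
  · have h := cwPsi_lip ((2:ℝ) ^ m * a - k) ((2:ℝ) ^ m * b - k)
    have hp : (0:ℝ) < (2:ℝ) ^ m := by positivity
    have e : ((2:ℝ) ^ m * a - k) - ((2:ℝ) ^ m * b - k) = (2:ℝ) ^ m * (a - b) := by ring
    rw [e, abs_mul, abs_of_pos hp] at h
    linarith
  · have h := N2_lip (a - k) (b - k)
    have e : (a - (k:ℝ)) - (b - (k:ℝ)) = a - b := by ring
    rw [e] at h
    have hm : (2:ℝ) ^ m = 1/2 := by rw [h1]; norm_num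
    rw [hm]
    linarith [abs_nonneg (a - b)]
  · simp only [sub_self, abs_zero]
    positivity

lemma rho1_le (x : ℝ) (n : ℤ) : rho1 x ≤ |x - 2 * n| := by
  rcases le_or_gt (2 * (n:ℝ)) x with h | h
  · have hn : (n:ℝ) ≤ ⌊x / 2⌋ := by
      exact_mod_cast Int.le_floor.mpr (by linarith)
    calc rho1 x ≤ 2 * Int.fract (x / 2) := min_le_left _ _
      _ = x - 2 * ⌊x / 2⌋ := by rw [Int.fract]; ring
      _ ≤ x - 2 * n := by linarith
      _ = |x - 2 * n| := (abs_of_nonneg (by linarith)).symm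
  · have hn : (-n:ℝ) ≤ ⌊-x / 2⌋ := by
      exact_mod_cast Int.le_floor.mpr (by push_cast; linarith)
    calc rho1 x ≤ 2 * Int.fract (-x / 2) := min_le_right _ _
      _ = -x - 2 * ⌊-x / 2⌋ := by rw [Int.fract]; ring
      _ ≤ -x + 2 * n := by linarith
      _ = |x - 2 * n| := by rw [abs_of_nonpos (by linarith)]; ring

lemma rho1_exists (x : ℝ) : ∃ n : ℤ, rho1 x = |x - 2 * n| := by
  unfold rho1
  rcases le_total (2 * Int.fract (x / 2)) (2 * Int.fract (-x / 2)) with h | h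
  · refine ⟨⌊x / 2⌋, ?_⟩
    have hnn : (0:ℝ) ≤ x - 2 * ⌊x / 2⌋ := by
      have := Int.fract_nonneg (x / 2)
      rw [Int.fract] at this
      linarith
    rw [min_eq_left h, abs_of_nonneg hnn, Int.fract]
    ring
  · refine ⟨-⌊-x / 2⌋, ?_⟩
    have hnp : x - 2 * ((-⌊-x / 2⌋ : ℤ) : ℝ) ≤ 0 := by
      have := Int.fract_nonneg (-x / 2)
      rw [Int.fract] at this
      push_cast
      linarith
    rw [min_eq_right h, abs_of_nonpos hnp, Int.fract]
    push_cast
    ring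

lemma rho1_lip (a b : ℝ) : |rho1 a - rho1 b| ≤ |a - b| := by
  rw [abs_sub_le_iff]
  constructor
  · obtain ⟨n, hn⟩ := rho1_exists b
    have h1 := rho1_le a n
    have h2 : |a - 2 * n| - |b - 2 * n| ≤ |a - b| := by
      have := abs_sub_abs_le_abs_sub (a - 2 * n) (b - 2 * n)
      have e : (a - 2 * (n:ℝ)) - (b - 2 * n) = a - b := by ring
      rwa [e] at this
    linarith
  · obtain ⟨n, hn⟩ := rho1_exists a
    have h1 := rho1_le b n
    have h2 : |b - 2 * n| - |a - 2 * n| ≤ |a - b| := by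
      have := abs_sub_abs_le_abs_sub (b - 2 * n) (a - 2 * n)
      have e : (b - 2 * (n:ℝ)) - (a - 2 * n) = -(a - b) := by ring
      rwa [e, abs_neg] at this
    linarith

lemma cont_of_lip (f : ℝ → ℝ) (K : ℝ) (h : ∀ a b, |f a - f b| ≤ K * |a - b|) :
    Continuous f := by
  have hl : LipschitzWith (Real.toNNReal K) f := by
    apply LipschitzWith.of_dist_le_mul
    intro a b
    rw [Real.dist_eq, Real.dist_eq]
    calc |f a - f b| ≤ K * |a - b| := h a b
      _ ≤ Real.toNNReal K * |a - b| :=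
        mul_le_mul_of_nonneg_right (Real.le_coe_toNNReal K) (abs_nonneg _)
  exact hl.continuous

/-- The rectangular second-order mean of differences at scale `2^{-j}` of the
reflected-periodized Chui–Wang wavelet at level `j + l` is uniformly bounded by a
constant times `min(1, 2^l)`. -/
theorem statement14 :
    ∃ C : ℝ, 0 < C ∧
      ∀ j : ℤ, 1 ≤ j → ∀ l k : ℤ, ∀ x : ℝ,
        (∫ h in (-1 : ℝ)..1,
            |diff2 (h * (2 : ℝ) ^ (-j)) (fun t => cw (j + l) k (rho1 t)) x|) ≤
          C * min 1 ((2 : ℝ) ^ l) := by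
  refine ⟨64, by norm_num, ?_⟩
  intro j hj l k x
  set m : ℤ := j + l with hm
  set c : ℝ := (2:ℝ) ^ (-j) with hc
  set g : ℝ → ℝ := fun t => cw m k (rho1 t) with hg
  have hgl : ∀ a b : ℝ, |g a - g b| ≤ 16 * (2:ℝ) ^ m * |a - b| := by
    intro a b
    calc |g a - g b| ≤ 16 * (2:ℝ) ^ m * |rho1 a - rho1 b| := cw_lip m k _ _
      _ ≤ 16 * (2:ℝ) ^ m * |a - b| :=
        mul_le_mul_of_nonneg_left (rho1_lip a b) (by positivity)
  have hgb : ∀ t, |g t| ≤ 1 := fun t => cw_abs_le m k (rho1 t)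
  have hpow : (2:ℝ) ^ m * (2:ℝ) ^ (-j) = (2:ℝ) ^ l := by
    rw [← zpow_add₀ (two_ne_zero : (2:ℝ) ≠ 0)]
    congr 1
    omega
  have hcpos : (0:ℝ) < c := by rw [hc]; positivity
  have key : ∀ h ∈ Set.Icc (-1:ℝ) 1, |diff2 (h * c) g x| ≤ 32 * min 1 ((2:ℝ) ^ l) := by
    intro h hh
    have hs : |h * c| ≤ c := by
      rw [abs_mul, abs_of_pos hcpos]
      have h1 : |h| ≤ 1 := abs_le.mpr ⟨hh.1, hh.2⟩
      calc |h| * c ≤ 1 * c := mul_le_mul_of_nonneg_right h1 hcpos.le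
        _ = c := one_mul c
    have d1 : |g (x + 2 * (h * c)) - g (x + h * c)| ≤ 16 * (2:ℝ) ^ m * |h * c| := by
      have := hgl (x + 2 * (h * c)) (x + h * c)
      have e : (x + 2 * (h * c)) - (x + h * c) = h * c := by ring
      rwa [e] at this
    have d2 : |g (x + h * c) - g x| ≤ 16 * (2:ℝ) ^ m * |h * c| := by
      have := hgl (x + h * c) x
      have e : (x + h * c) - x = h * c := by ring
      rwa [e] at this
    have b1 : |diff2 (h * c) g x| ≤ 32 * (2:ℝ) ^ m * |h * c| := by
      have e : diff2 (h * c) g x =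
          (g (x + 2 * (h * c)) - g (x + h * c)) - (g (x + h * c) - g x) := by
        unfold diff2; ring
      rw [e]
      calc |(g (x + 2 * (h * c)) - g (x + h * c)) - (g (x + h * c) - g x)|
          ≤ |g (x + 2 * (h * c)) - g (x + h * c)| + |g (x + h * c) - g x| := abs_sub _ _
        _ ≤ 32 * (2:ℝ) ^ m * |h * c| := by linarith
    have b2 : |diff2 (h * c) g x| ≤ 4 := by
      have h1 := abs_le.mp (hgb (x + 2 * (h * c)))
      have h2 := abs_le.mp (hgb (x + h * c))
      have h3 := abs_le.mp (hgb x)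
      unfold diff2
      rw [abs_le]
      constructor <;> [skip; skip] <;>
        · obtain ⟨a1, a2⟩ := h1; obtain ⟨b1', b2'⟩ := h2; obtain ⟨c1, c2⟩ := h3; linarith
    have hb3 : 32 * (2:ℝ) ^ m * |h * c| ≤ 32 * (2:ℝ) ^ l := by
      calc 32 * (2:ℝ) ^ m * |h * c| ≤ 32 * (2:ℝ) ^ m * c :=
            mul_le_mul_of_nonneg_left hs (by positivity)
        _ = 32 * (2:ℝ) ^ l := by rw [hc, mul_assoc, hpow]
    rcases le_total ((2:ℝ) ^ l) 1 with hle | hle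
    · rw [min_eq_right hle]; linarith
    · rw [min_eq_left hle]; linarith
  have hgc : Continuous g := cont_of_lip g _ hgl
  have hcont : Continuous fun h : ℝ => |diff2 (h * c) g x| := by
    have e : (fun h : ℝ => diff2 (h * c) g x) =
        fun h : ℝ => g (x + 2 * (h * c)) - 2 * g (x + h * c) + g x := rfl
    apply Continuous.abs
    rw [e]
    fun_prop
  have hint : IntervalIntegrable (fun h => |diff2 (h * c) g x|) volume (-1) 1 :=
    hcont.intervalIntegrable _ _
  calc (∫ h in (-1:ℝ)..1, |diff2 (h * c) g x|)
      ≤ ∫ _ in (-1:ℝ)..1, (32 * min 1 ((2:ℝ) ^ l)) :=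
        intervalIntegral.integral_mono_on (by norm_num) hint intervalIntegrable_const key
    _ = 64 * min 1 ((2:ℝ) ^ l) := by
        rw [intervalIntegral.integral_const]
        rw [smul_eq_mul]
        ring_nf
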